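/- Let n ≥ 3. Let N be the normal closure in the Artin group A(Ã_{n-1}) of the single element (a_n·a_{n-1}⋯a_2)·(a_{n-1}·a_{n-2}⋯a_1)⁻¹. Then the quotient A(Ã_{n-1})/N is isomorphic to the braid group A(A_{n-1}) on n strands. -/

import Mathlib

namespace Stmt13

/-- The braid relator `x y x (y x y)⁻¹` (weight 3). -/
def braidRel {γ : Type} (x y : FreeGroup γ) : FreeGroup γ := x * y * x * (y * x * y)⁻¹

/-- The commutation relator `x y (y x)⁻¹` (weight 2). -/
def commRel {γ : Type} (x y : FreeGroup γ) : FreeGroup γ := x * y * (y * x)⁻¹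

/-- Relations of the Artin group `A(Ã_{n-1})`: the generator indexed by `i : Fin n`
is `a_{i+1}`; cyclically adjacent generators braid, all other pairs commute. -/
def AtildeRels (n : ℕ) : Set (FreeGroup (Fin n)) :=
  { r | ∃ i j : Fin n,
      ((j : ℕ) = ((i : ℕ) + 1) % n ∧ r = braidRel (.of i) (.of j)) ∨
      (i ≠ j ∧ (j : ℕ) ≠ ((i : ℕ) + 1) % n ∧ (i : ℕ) ≠ ((j : ℕ) + 1) % n ∧
        r = commRel (.of i) (.of j)) }

/-- The Artin group `A(Ã_{n-1})`. -/
abbrev Atilde (n : ℕ) : Type := PresentedGroup (AtildeRels n)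

/-- The standard generator `a_i` (for `1 ≤ i ≤ n`) of `A(Ã_{n-1})`. -/
def a (n : ℕ) (i : ℕ) : Atilde n :=
  if h : 0 < n then PresentedGroup.of ⟨(i - 1) % n, Nat.mod_lt _ h⟩ else 1

/-- The descending product `a_m · a_{m-1} ⋯ a_k` in `A(Ã_{n-1})`. -/
def dprod (n : ℕ) (k m : ℕ) : Atilde n :=
  ((List.range' k (m + 1 - k)).reverse.map (a n)).prod

/-- Relations of the braid group `A(A_m)` on `m + 1` strands: the generator
indexed by `i : Fin m` is `σ_{i+1}`; adjacent generators braid, distant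
generators commute. -/
def braidRels (m : ℕ) : Set (FreeGroup (Fin m)) :=
  { r | ∃ i j : Fin m,
      ((j : ℕ) = (i : ℕ) + 1 ∧ r = braidRel (.of i) (.of j)) ∨
      ((i : ℕ) + 2 ≤ (j : ℕ) ∧ r = commRel (.of i) (.of j)) }

/-- The braid group on `m + 1` strands, i.e. the Artin group `A(A_m)`. -/
abbrev BraidGroup (m : ℕ) : Type := PresentedGroup (braidRels m)

/-!
The relator says `a_n = δ a_1 δ⁻¹` with `δ = a_{n-1} ⋯ a_2`, so the quotient is generated by
`a_1, …, a_{n-1}`, which satisfy the braid relations; this gives a map from the braid group onto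
the quotient. Conversely, in the braid group put `A = T σ_1 T⁻¹` with `T = σ_{n-1} ⋯ σ_2`.
Conjugation by `T` sends `σ_{j+1}` to `σ_j` for `2 ≤ j ≤ n - 2`, so `A` commutes with these `σ_j`;
writing `A` as a conjugate of `σ_2` by an element centralising `σ_1`, and (through
`σ_{k} ⋯ σ_2 σ_1 (σ_{k} ⋯ σ_2)⁻¹ = (σ_{k-1} ⋯ σ_1)⁻¹ σ_k (σ_{k-1} ⋯ σ_1)`) as a conjugate of
`σ_{n-2}` by an element centralising `σ_{n-1}`, shows that `A` braids with `σ_1` and `σ_{n-1}`.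
Hence `a_i ↦ σ_i`, `a_n ↦ A` defines a homomorphism killing the relator, inverse to the first map.
-/

section Braid

variable {G H : Type*} [Group G] [Group H]

def Braid (x y : G) : Prop := x * y * x = y * x * y

namespace Braid

variable {x y : G}

lemma symm (h : Braid x y) : Braid y x := Eq.symm h

lemma map (h : Braid x y) (f : G →* H) : Braid (f x) (f y) := by
  simpa only [Braid, map_mul] using congrArg f h

lemma conj (h : Braid x y) (g : G) : Braid (g * x * g⁻¹) (g * y * g⁻¹) :=
  h.map (MulAut.conj g).toMonoidHom

lemma conj_of_commute (h : Braid x y) {g : G} (hg : Commute g y) :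
    Braid (g * x * g⁻¹) y := by
  simpa only [hg.mul_inv_cancel] using h.conj g

lemma mul_mul_inv_eq (h : Braid x y) : y * x * y⁻¹ = x⁻¹ * y * x := by
  calc y * x * y⁻¹ = x⁻¹ * (x * y * x) * x⁻¹ * (x * y⁻¹) := by group
    _ = x⁻¹ * (y * x * y) * x⁻¹ * (x * y⁻¹) := by rw [h]
    _ = x⁻¹ * y * x := by group

end Braid

end Braid

section DescProd

variable {M N : Type*} [Monoid M] [Monoid N]

def descProd (f : ℕ → M) (k l : ℕ) : M := ((List.range' k l).reverse.map f).prod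

@[simp] lemma descProd_zero (f : ℕ → M) (k : ℕ) : descProd f k 0 = 1 := rfl

lemma descProd_succ (f : ℕ → M) (k l : ℕ) :
    descProd f k (l + 1) = f (k + l) * descProd f k l := by
  simp [descProd, List.range'_1_concat]

lemma descProd_succ' (f : ℕ → M) (k l : ℕ) :
    descProd f k (l + 1) = descProd f (k + 1) l * f k := by
  simp [descProd, List.range'_succ]

lemma descProd_add_one (f : ℕ → M) (k l : ℕ) :
    descProd f (k + 1) l = descProd (fun i => f (i + 1)) k l := by
  simp only [descProd, List.range'_eq_map_range, List.map_reverse, List.map_map]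
  congr 3
  funext i
  simp only [Function.comp_apply]
  ring_nf

lemma descProd_congr {f g : ℕ → M} {k l : ℕ} (h : ∀ i, k ≤ i → i < k + l → f i = g i) :
    descProd f k l = descProd g k l := by
  simp only [descProd]
  congr 1
  refine List.map_congr_left fun i hi => h i ?_ ?_ <;>
    simp only [List.mem_reverse, List.mem_range'_1] at hi <;> omega

lemma map_descProd (φ : M →* N) (f : ℕ → M) (k l : ℕ) :
    φ (descProd f k l) = descProd (φ ∘ f) k l := by
  simp only [descProd, map_list_prod, List.map_map]

lemma commute_descProd {x : M} {f : ℕ → M} {k l : ℕ}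
    (h : ∀ i, k ≤ i → i < k + l → Commute x (f i)) : Commute x (descProd f k l) :=
  Commute.list_prod_right _ _ fun y hy => by
    obtain ⟨i, hi, rfl⟩ := List.mem_map.mp hy
    simp only [List.mem_reverse, List.mem_range'_1] at hi
    exact h i hi.1 hi.2

end DescProd

section BraidFamily

variable {G : Type*} [Group G]

-- Indexed from `0`: `s k` plays the role of `σ_{k+1}`, or of `a_{k+1}`.
structure IsBraidFamily (m : ℕ) (s : ℕ → G) : Prop where
  braid : ∀ i, i + 1 < m → Braid (s i) (s (i + 1))
  commute : ∀ i j, i + 2 ≤ j → j < m → Commute (s i) (s j)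

namespace IsBraidFamily

variable {m : ℕ} {s : ℕ → G}

lemma commute_of_far (hs : IsBraidFamily m s) {i j : ℕ} (hij : i + 2 ≤ j ∨ j + 2 ≤ i)
    (hi : i < m) (hj : j < m) : Commute (s i) (s j) := by
  rcases hij with hij | hij
  · exact hs.commute i j hij hj
  · exact (hs.commute j i hij hi).symm

lemma commute_descProd (hs : IsBraidFamily m s) {q k l : ℕ}
    (hq : q + 2 ≤ k ∨ k + l + 1 ≤ q) (hq' : q < m) (hkl : k + l ≤ m) :
    Commute (s q) (descProd s k l) :=
  Stmt13.commute_descProd fun i hi hi' => hs.commute_of_far (by omega) hq' (by omega)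

lemma mul_descProd (hs : IsBraidFamily m s) {j k l : ℕ} (hkj : k ≤ j) (hj : j + 1 < k + l)
    (hl : k + l ≤ m) : s j * descProd s k l = descProd s k l * s (j + 1) := by
  induction l with
  | zero => omega
  | succ l ih =>
    rw [descProd_succ]
    rcases Nat.lt_or_ge (j + 1) (k + l) with hjl | hjl
    · rw [← mul_assoc, (hs.commute j (k + l) (by omega) (by omega)).eq, mul_assoc,
        ih hjl (by omega), mul_assoc]
    · obtain ⟨l, rfl⟩ : ∃ l', l = l' + 1 := ⟨l - 1, by omega⟩
      obtain rfl : j = k + l := by omega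
      have hc := hs.commute_descProd (q := k + l + 1) (k := k) (l := l) (by omega) (by omega)
        (by omega)
      rw [descProd_succ, show k + (l + 1) = k + l + 1 by omega]
      calc s (k + l) * (s (k + l + 1) * (s (k + l) * descProd s k l))
          = s (k + l) * s (k + l + 1) * s (k + l) * descProd s k l := by group
        _ = s (k + l + 1) * s (k + l) * (s (k + l + 1) * descProd s k l) := by
          rw [hs.braid (k + l) (by omega)]; group
        _ = s (k + l + 1) * (s (k + l) * descProd s k l) * s (k + l + 1) := by
          rw [hc.eq]; group

lemma descProd_conj_eq (hs : IsBraidFamily m s) {k : ℕ} (hk : k < m) :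
    descProd s 1 k * s 0 * (descProd s 1 k)⁻¹ = (descProd s 0 k)⁻¹ * s k * descProd s 0 k := by
  induction k with
  | zero => simp
  | succ k ih =>
    have hc := hs.commute_descProd (q := k + 1) (k := 0) (l := k) (by omega) hk (by omega)
    rw [descProd_succ, descProd_succ, show 1 + k = k + 1 by omega, zero_add]
    calc s (k + 1) * descProd s 1 k * s 0 * (s (k + 1) * descProd s 1 k)⁻¹
        = s (k + 1) * (descProd s 1 k * s 0 * (descProd s 1 k)⁻¹) * (s (k + 1))⁻¹ := by group
      _ = (s (k + 1) * (descProd s 0 k)⁻¹) * s k * (descProd s 0 k * (s (k + 1))⁻¹) := by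
        rw [ih (by omega)]; group
      _ = (descProd s 0 k)⁻¹ * (s (k + 1) * s k * (s (k + 1))⁻¹) * descProd s 0 k := by
        rw [hc.inv_right.eq, ← hc.inv_left.eq]; group
      _ = (s k * descProd s 0 k)⁻¹ * s (k + 1) * (s k * descProd s 0 k) := by
        rw [(hs.braid k hk).mul_mul_inv_eq]; group

end IsBraidFamily

end BraidFamily

section ClosingGen

variable {G H : Type*} [Group G] [Group H]

def closingGen (s : ℕ → G) (m : ℕ) : G :=
  descProd s 1 (m + 1) * s 0 * (descProd s 1 (m + 1))⁻¹

lemma closingGen_congr {s t : ℕ → G} {m : ℕ} (h : ∀ k < m + 2, s k = t k) :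
    closingGen s m = closingGen t m := by
  rw [closingGen, closingGen, h 0 (by omega),
    descProd_congr fun i _ hi => h i (by omega)]

lemma map_closingGen (φ : G →* H) (s : ℕ → G) (m : ℕ) :
    φ (closingGen s m) = closingGen (φ ∘ s) m := by
  simp only [closingGen, map_mul, map_inv, map_descProd, Function.comp_apply]

namespace IsBraidFamily

variable {m : ℕ} {s : ℕ → G}

lemma braid_closingGen_zero (hs : IsBraidFamily (m + 2) s) : Braid (closingGen s m) (s 0) := by
  obtain ⟨R, hRdef⟩ : ∃ R, R = descProd s 2 m := ⟨_, rfl⟩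
  have hR : Commute (R * (s 0)⁻¹) (s 0) := hRdef ▸
    (hs.commute_descProd (q := 0) (by omega) (by omega) (by omega)).symm.mul_left
      (Commute.refl _).inv_left
  have hA : closingGen s m = (R * (s 0)⁻¹) * s 1 * (R * (s 0)⁻¹)⁻¹ := by
    calc closingGen s m = R * (s 1 * s 0 * (s 1)⁻¹) * R⁻¹ := by
          rw [closingGen, descProd_succ', hRdef]; group
      _ = (R * (s 0)⁻¹) * s 1 * (R * (s 0)⁻¹)⁻¹ := by
          rw [(hs.braid 0 (by omega)).mul_mul_inv_eq]; group
  rw [hA]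
  exact (hs.braid 0 (by omega)).symm.conj_of_commute hR

lemma braid_last_closingGen (hs : IsBraidFamily (m + 2) s) :
    Braid (s (m + 1)) (closingGen s m) := by
  obtain ⟨V, hVdef⟩ : ∃ V, V = descProd s 0 m := ⟨_, rfl⟩
  have hV : Commute (V⁻¹ * s (m + 1)) (s (m + 1)) := hVdef ▸
    (hs.commute_descProd (q := m + 1) (by omega) (by omega) (by omega)).symm.inv_left.mul_left
      (Commute.refl _)
  have hA : closingGen s m = (V⁻¹ * s (m + 1)) * s m * (V⁻¹ * s (m + 1))⁻¹ := by
    have hc : Commute (s (m + 1)) V :=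
      hVdef ▸ hs.commute_descProd (by omega) (by omega) (by omega)
    calc closingGen s m = s (m + 1) * (V⁻¹ * s m * V) * (s (m + 1))⁻¹ := by
          rw [hVdef, ← hs.descProd_conj_eq (by omega), closingGen, descProd_succ,
            show 1 + m = m + 1 by omega]; group
      _ = (s (m + 1) * V⁻¹) * s m * (V * (s (m + 1))⁻¹) := by group
      _ = (V⁻¹ * s (m + 1)) * s m * (V⁻¹ * s (m + 1))⁻¹ := by
          rw [hc.inv_right.eq, ← hc.inv_left.eq]; group
  rw [hA]
  exact ((hs.braid m (by omega)).conj_of_commute hV).symm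

lemma commute_closingGen (hs : IsBraidFamily (m + 2) s) {j : ℕ} (hj : 1 ≤ j) (hjm : j ≤ m) :
    Commute (closingGen s m) (s j) := by
  obtain ⟨T, hTdef⟩ : ∃ T, T = descProd s 1 (m + 1) := ⟨_, rfl⟩
  have hT : s j = T * s (j + 1) * T⁻¹ := by
    rw [hTdef, ← hs.mul_descProd hj (by omega) (by omega)]; group
  rw [closingGen, ← hTdef, hT]
  exact (hs.commute 0 (j + 1) (by omega) (by omega)).map (MulAut.conj T).toMonoidHom

end IsBraidFamily

end ClosingGen

section Presentations

variable {G : Type*} [Group G]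

lemma lift_braidRel_eq_one_iff {α : Type} (f : α → G) (i j : α) :
    FreeGroup.lift f (braidRel (.of i) (.of j)) = 1 ↔ Braid (f i) (f j) := by
  simp only [braidRel, Braid, map_mul, map_inv, FreeGroup.lift_apply_of, mul_inv_eq_one]

lemma lift_commRel_eq_one_iff {α : Type} (f : α → G) (i j : α) :
    FreeGroup.lift f (commRel (.of i) (.of j)) = 1 ↔ Commute (f i) (f j) := by
  simp only [commRel, Commute, SemiconjBy, map_mul, map_inv, FreeGroup.lift_apply_of,
    mul_inv_eq_one]

lemma PresentedGroup.mk_eq_lift {α : Type} (rels : Set (FreeGroup α)) :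
    PresentedGroup.mk rels = FreeGroup.lift PresentedGroup.of :=
  FreeGroup.ext_hom _ _ fun _ => rfl

lemma PresentedGroup.braid_of {α : Type} {rels : Set (FreeGroup α)} {i j : α}
    (h : braidRel (.of i) (.of j) ∈ rels) :
    Braid (PresentedGroup.of i : PresentedGroup rels) (PresentedGroup.of j) :=
  (lift_braidRel_eq_one_iff _ i j).mp (PresentedGroup.mk_eq_lift rels ▸ PresentedGroup.one_of_mem h)

lemma PresentedGroup.commute_of {α : Type} {rels : Set (FreeGroup α)} {i j : α}
    (h : commRel (.of i) (.of j) ∈ rels) :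
    Commute (PresentedGroup.of i : PresentedGroup rels) (PresentedGroup.of j) :=
  (lift_commRel_eq_one_iff _ i j).mp (PresentedGroup.mk_eq_lift rels ▸ PresentedGroup.one_of_mem h)

end Presentations

section BraidGroup

variable {G : Type*} [Group G] {m : ℕ} {s : ℕ → G}

namespace BraidGroup

def gen (m k : ℕ) : BraidGroup m := if h : k < m then PresentedGroup.of ⟨k, h⟩ else 1

lemma gen_of_lt {k : ℕ} (h : k < m) : gen m k = PresentedGroup.of ⟨k, h⟩ := dif_pos h

lemma isBraidFamily_gen (m : ℕ) : IsBraidFamily m (gen m) where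
  braid i hi := by
    rw [gen_of_lt (by omega), gen_of_lt hi]
    exact PresentedGroup.braid_of ⟨⟨i, by omega⟩, ⟨i + 1, hi⟩, .inl ⟨rfl, rfl⟩⟩
  commute i j hij hj := by
    rw [gen_of_lt (by omega), gen_of_lt hj]
    exact PresentedGroup.commute_of ⟨⟨i, by omega⟩, ⟨j, hj⟩, .inr ⟨hij, rfl⟩⟩

noncomputable def lift (hs : IsBraidFamily m s) : BraidGroup m →* G :=
  PresentedGroup.toGroup (rels := braidRels m) (f := fun i : Fin m => s i) <| by
    rintro r ⟨i, j, ⟨hij, rfl⟩ | ⟨hij, rfl⟩⟩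
    · rw [lift_braidRel_eq_one_iff, hij]
      exact hs.braid i (hij ▸ j.isLt)
    · exact (lift_commRel_eq_one_iff _ i j).mpr (hs.commute i j hij j.isLt)

lemma lift_gen (hs : IsBraidFamily m s) {k : ℕ} (hk : k < m) : lift hs (gen m k) = s k := by
  rw [gen_of_lt hk, lift, PresentedGroup.toGroup.of]

lemma hom_ext {φ ψ : BraidGroup m →* G} (h : ∀ k < m, φ (gen m k) = ψ (gen m k)) : φ = ψ :=
  PresentedGroup.ext fun i => by simpa only [gen_of_lt i.isLt] using h i i.isLt

end BraidGroup

end BraidGroup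

section Atilde

variable {G : Type*} [Group G] {m : ℕ} {s : ℕ → G}

open Function

lemma eq_add_one_mod_iff {i j n : ℕ} (hi : i < n) :
    j = (i + 1) % n ↔ (i + 1 < n ∧ j = i + 1) ∨ (i + 1 = n ∧ j = 0) := by
  rcases Nat.lt_or_ge (i + 1) n with h | h
  · rw [Nat.mod_eq_of_lt h]; omega
  · rw [show i + 1 = n by omega, Nat.mod_self]; omega

namespace IsBraidFamily

lemma braid_update_closingGen (hs : IsBraidFamily (m + 2) s) {i j : ℕ} (hi : i < m + 3)
    (hij : j = (i + 1) % (m + 3)) :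
    Braid (update s (m + 2) (closingGen s m) i) (update s (m + 2) (closingGen s m) j) := by
  rcases (eq_add_one_mod_iff hi).mp hij with ⟨hi', rfl⟩ | ⟨hi', rfl⟩
  · rcases eq_or_ne i (m + 1) with rfl | hne
    · rw [update_self, update_of_ne (by omega)]
      exact hs.braid_last_closingGen
    · rw [update_of_ne (by omega), update_of_ne (by omega)]
      exact hs.braid i (by omega)
  · obtain rfl : i = m + 2 := by omega
    rw [update_self, update_of_ne (by omega)]
    exact hs.braid_closingGen_zero

lemma commute_update_closingGen (hs : IsBraidFamily (m + 2) s) {i j : ℕ} (hi : i < m + 3)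
    (hj : j < m + 3) (hne : i ≠ j) (hij : j ≠ (i + 1) % (m + 3)) (hji : i ≠ (j + 1) % (m + 3)) :
    Commute (update s (m + 2) (closingGen s m) i) (update s (m + 2) (closingGen s m) j) := by
  rw [Ne, eq_add_one_mod_iff hi] at hij
  rw [Ne, eq_add_one_mod_iff hj] at hji
  by_cases hi' : i = m + 2
  · subst hi'
    rw [update_self, update_of_ne hne.symm]
    exact hs.commute_closingGen (by omega) (by omega)
  by_cases hj' : j = m + 2
  · subst hj'
    rw [update_self, update_of_ne hne]
    exact (hs.commute_closingGen (by omega) (by omega)).symm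
  rw [update_of_ne hi', update_of_ne hj']
  exact hs.commute_of_far (by omega) (by omega) (by omega)

end IsBraidFamily

namespace Atilde

lemma a_succ {n k : ℕ} (hk : k < n) : a n (k + 1) = PresentedGroup.of ⟨k, hk⟩ := by
  simp only [a, dif_pos (show 0 < n by omega), Nat.add_sub_cancel, Nat.mod_eq_of_lt hk]

lemma isBraidFamily_a (m : ℕ) : IsBraidFamily m (fun k => a (m + 1) (k + 1)) where
  braid i hi := by
    rw [a_succ (by omega), a_succ (by omega : i + 1 < m + 1)]
    exact PresentedGroup.braid_of
      ⟨⟨i, by omega⟩, ⟨i + 1, by omega⟩, .inl ⟨(Nat.mod_eq_of_lt (by omega)).symm, rfl⟩⟩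
  commute i j hij hj := by
    rw [a_succ (by omega), a_succ (by omega : j < m + 1)]
    refine PresentedGroup.commute_of ⟨⟨i, by omega⟩, ⟨j, by omega⟩, .inr ⟨?_, ?_, ?_, rfl⟩⟩
    · rw [Ne, Fin.mk.injEq]; omega
    · rw [Fin.val_mk, Fin.val_mk, Nat.mod_eq_of_lt (show i + 1 < m + 1 by omega)]; omega
    · rw [Fin.val_mk, Fin.val_mk, Nat.mod_eq_of_lt (show j + 1 < m + 1 by omega)]; omega

lemma hom_ext {n : ℕ} {φ ψ : Atilde n →* G} (h : ∀ k < n, φ (a n (k + 1)) = ψ (a n (k + 1))) :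
    φ = ψ :=
  PresentedGroup.ext fun i => by simpa only [a_succ i.isLt] using h i i.isLt

lemma lift_eq_one_of_cyclic {n : ℕ} {f : Fin n → G}
    (hb : ∀ i j : Fin n, (j : ℕ) = (i + 1) % n → Braid (f i) (f j))
    (hc : ∀ i j : Fin n, i ≠ j → (j : ℕ) ≠ (i + 1) % n → (i : ℕ) ≠ (j + 1) % n →
      Commute (f i) (f j)) :
    ∀ r ∈ AtildeRels n, FreeGroup.lift f r = 1 := by
  rintro r ⟨i, j, ⟨hij, rfl⟩ | ⟨hne, hij, hji, rfl⟩⟩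
  · exact (lift_braidRel_eq_one_iff f i j).mpr (hb i j hij)
  · exact (lift_commRel_eq_one_iff f i j).mpr (hc i j hne hij hji)

noncomputable def liftClosing (hs : IsBraidFamily (m + 2) s) : Atilde (m + 3) →* G :=
  PresentedGroup.toGroup (rels := AtildeRels (m + 3))
    (f := fun i : Fin (m + 3) => update s (m + 2) (closingGen s m) i) <|
    lift_eq_one_of_cyclic (fun i _ hij => hs.braid_update_closingGen i.isLt hij)
      fun i j hne hij hji =>
        hs.commute_update_closingGen i.isLt j.isLt (Fin.val_ne_of_ne hne) hij hji

lemma liftClosing_a (hs : IsBraidFamily (m + 2) s) {k : ℕ} (hk : k < m + 3) :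
    liftClosing hs (a (m + 3) (k + 1)) = update s (m + 2) (closingGen s m) k := by
  rw [a_succ hk, liftClosing, PresentedGroup.toGroup.of]

lemma liftClosing_a_of_lt (hs : IsBraidFamily (m + 2) s) {k : ℕ} (hk : k < m + 2) :
    liftClosing hs (a (m + 3) (k + 1)) = s k := by
  rw [liftClosing_a hs (by omega), update_of_ne (by omega)]

lemma liftClosing_a_last (hs : IsBraidFamily (m + 2) s) :
    liftClosing hs (a (m + 3) (m + 3)) = closingGen s m := by
  rw [liftClosing_a hs (by omega), update_self]

lemma dprod_mul_inv_dprod (m : ℕ) :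
    dprod (m + 3) 2 (m + 3) * (dprod (m + 3) 1 (m + 2))⁻¹ =
      a (m + 3) (m + 3) * (closingGen (fun k => a (m + 3) (k + 1)) m)⁻¹ := by
  have htop : dprod (m + 3) 2 (m + 3) =
      a (m + 3) (m + 3) * descProd (fun k => a (m + 3) (k + 1)) 1 (m + 1) := by
    rw [dprod, ← descProd, show m + 3 + 1 - 2 = m + 1 + 1 by omega, descProd_add_one,
      descProd_succ, show 1 + (m + 1) + 1 = m + 3 by omega]
  have hbot : dprod (m + 3) 1 (m + 2) =
      descProd (fun k => a (m + 3) (k + 1)) 1 (m + 1) * a (m + 3) 1 := by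
    rw [dprod, ← descProd, show m + 2 + 1 - 1 = m + 1 + 1 by omega, descProd_succ',
      descProd_add_one]
  rw [htop, hbot, closingGen]
  group

lemma liftClosing_relator (hs : IsBraidFamily (m + 2) s) :
    liftClosing hs (dprod (m + 3) 2 (m + 3) * (dprod (m + 3) 1 (m + 2))⁻¹) = 1 := by
  have h : ∀ k < m + 2, (liftClosing hs ∘ fun k => a (m + 3) (k + 1)) k = s k :=
    fun _ hk => liftClosing_a_of_lt hs hk
  rw [dprod_mul_inv_dprod, map_mul, map_inv, map_closingGen, liftClosing_a_last,
    closingGen_congr h, mul_inv_cancel]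

end Atilde

end Atilde

lemma Atilde.mk_a_last (m : ℕ) :
    (QuotientGroup.mk (a (m + 3) (m + 3)) : Atilde (m + 3) ⧸
      Subgroup.normalClosure {dprod (m + 3) 2 (m + 3) * (dprod (m + 3) 1 (m + 2))⁻¹}) =
      QuotientGroup.mk (closingGen (fun k => a (m + 3) (k + 1)) m) := by
  rw [QuotientGroup.eq_iff_div_mem, div_eq_mul_inv, ← Atilde.dprod_mul_inv_dprod]
  exact Subgroup.subset_normalClosure rfl

lemma BraidGroup.lift_closingGen {G : Type*} [Group G] {m : ℕ} {s : ℕ → G}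
    (hs : IsBraidFamily (m + 2) s) :
    BraidGroup.lift hs (closingGen (BraidGroup.gen (m + 2)) m) = closingGen s m := by
  have h : ∀ k < m + 2, (BraidGroup.lift hs ∘ BraidGroup.gen (m + 2)) k = s k :=
    fun _ hk => BraidGroup.lift_gen hs hk
  rw [map_closingGen, closingGen_congr h]

/-- For `n ≥ 3`, the quotient of `A(Ã_{n-1})` by the normal
closure of `(a_n ⋯ a_2) · (a_{n-1} ⋯ a_1)⁻¹` is isomorphic to the braid group
`A(A_{n-1})` on `n` strands. -/
theorem quotient_Atilde_iso_braid_group (n : ℕ) (hn : 3 ≤ n) :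
    Nonempty ((Atilde n ⧸ Subgroup.normalClosure {dprod n 2 n * (dprod n 1 (n - 1))⁻¹}) ≃*
      BraidGroup (n - 1)) := by
  obtain ⟨m, rfl⟩ : ∃ m, n = m + 3 := ⟨n - 3, by omega⟩
  rw [show m + 3 - 1 = m + 2 from rfl]
  let N : Subgroup (Atilde (m + 3)) :=
    Subgroup.normalClosure {dprod (m + 3) 2 (m + 3) * (dprod (m + 3) 1 (m + 2))⁻¹}
  let φ := Atilde.liftClosing (BraidGroup.isBraidFamily_gen (m + 2))
  have hb : IsBraidFamily (m + 2) fun k => a (m + 3) (k + 1) := Atilde.isBraidFamily_a (m + 2)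
  let ψ := (QuotientGroup.mk' N).comp (BraidGroup.lift hb)
  have hN : N ≤ φ.ker := Subgroup.normalClosure_le_normal <|
    Set.singleton_subset_iff.mpr (Atilde.liftClosing_relator _)
  refine ⟨MonoidHom.toMulEquiv (QuotientGroup.lift N φ hN) ψ ?_ ?_⟩
  · refine QuotientGroup.monoidHom_ext _ (Atilde.hom_ext fun k hk => ?_)
    simp only [MonoidHom.comp_apply, QuotientGroup.mk'_apply, QuotientGroup.lift_mk,
      MonoidHom.id_apply, ψ, φ]
    rcases Nat.lt_or_ge k (m + 2) with hk | hk
    · rw [Atilde.liftClosing_a_of_lt _ hk, BraidGroup.lift_gen _ hk]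
    · obtain rfl : k = m + 2 := by omega
      rw [Atilde.liftClosing_a_last, BraidGroup.lift_closingGen, Atilde.mk_a_last]
  · refine BraidGroup.hom_ext fun k hk => ?_
    simp only [MonoidHom.comp_apply, QuotientGroup.mk'_apply, QuotientGroup.lift_mk,
      MonoidHom.id_apply, ψ, φ]
    rw [BraidGroup.lift_gen _ hk, Atilde.liftClosing_a_of_lt _ hk]

end Stmt13
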